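/- Assume Assumption (β) and let Ω ⊆ V be nonempty. Then h̃(Ω)²/8 ≤ ν(Δ̃^D_Ω) ≤ (1/2) h̃(Ω), where ν(Δ̃^D_Ω) = inf{ Re (Δ̃f, f)_{β⁺} : f finitely supported, supp f ⊆ Ω, ‖f‖_{β⁺} = 1 }. -/

import Mathlib

/-!
Green's formula turns `Re (Δ̃f, f)_{β⁺}` into the energy `½ Σ_{x,y} b(x,y) |f(x) - f(y)|²`;
assumption (β) is what makes the diagonal terms `|f(x)|² - |f(y)|²` cancel. The normalized
indicator of a finite `U ⊆ Ω` has energy `b(∂_E U) / (2 β⁺(U))`, which gives the upper bound.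
For the lower bound, the co-area inequality `h̃(Ω) Σ β⁺ φ ≤ Σ_{x,y} b(x,y) |φ(x) - φ(y)|` for
`φ ≥ 0`, proved by peeling off the lowest level set of `φ`, is applied to `φ = |f|²`; writing
`|f(x)|² - |f(y)|² = (|f(x)| - |f(y)|)(|f(x)| + |f(y)|)`, Cauchy–Schwarz bounds the right side
by `(2 Re (Δ̃f, f) · 4 ‖f‖²)^{1/2}`.
-/

open Function Complex

noncomputable def betaPlus {V : Type*} (b : V → V → ℝ) (x : V) : ℝ := ∑ᶠ y, b x y
noncomputable def betaMinus {V : Type*} (b : V → V → ℝ) (x : V) : ℝ := ∑ᶠ y, b y x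

/-- The Laplacian `Δf(x) = (1/m(x)) Σ_y b(x,y)(f(x) - f(y))`; the normalized Laplacian
`Δ̃` is the case `m = β⁺`. -/
noncomputable def lap {V : Type*} (b : V → V → ℝ) (m : V → ℝ) (f : V → ℂ) (x : V) : ℂ :=
  (1 / (m x : ℂ)) * ∑ᶠ y, (b x y : ℂ) * (f x - f y)

/-- The weighted inner product `(f,g)_w = Σ_x w(x) f(x) conj(g(x))`. -/
noncomputable def innerW {V : Type*} (w : V → ℝ) (f g : V → ℂ) : ℂ :=
  ∑ᶠ x, (w x : ℂ) * f x * (starRingEnd ℂ) (g x)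

/-- The total edge-boundary weight of a finite set `U`:
`b(∂_E U) = Σ_{x∈U, y∉U} b(x,y) + Σ_{x∉U, y∈U} b(x,y)`. -/
noncomputable def bdryWeight {V : Type*} [DecidableEq V] (b : V → V → ℝ) (U : Finset V) :
    ℝ :=
  ∑ x ∈ U, ∑ᶠ y, (if y ∈ U then 0 else b x y + b y x)

/-- The Cheeger constant of `Ω ⊆ V` with respect to the weight `w`:
`h(Ω) = inf { b(∂_E U) / w(U) : U ⊆ Ω finite nonempty }`. -/
noncomputable def cheeger {V : Type*} [DecidableEq V] (b : V → V → ℝ) (w : V → ℝ)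
    (Ω : Set V) : ℝ :=
  sInf {r : ℝ | ∃ U : Finset V, U.Nonempty ∧ ↑U ⊆ Ω ∧ r = bdryWeight b U / ∑ x ∈ U, w x}

/-- The bottom of the real part of the numerical range of the Dirichlet Laplacian on `Ω`:
`ν(Δ^D_Ω) = inf { Re (Δf, f)_m : f finitely supported, supp f ⊆ Ω, ‖f‖_m = 1 }`. -/
noncomputable def nuD {V : Type*} (b : V → V → ℝ) (m : V → ℝ) (Ω : Set V) : ℝ :=
  sInf {r : ℝ | ∃ f : V → ℂ, (support f).Finite ∧ support f ⊆ Ω ∧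
    innerW m f f = 1 ∧ r = (innerW m (lap b m f) f).re}

open Finset ComplexConjugate

lemma abs_sub_eq_abs_min_sub_min_add_abs_max_sub_max (a b t : ℝ) :
    |a - b| = |min a t - min b t| + |max a t - max b t| := by
  grind [abs_of_nonneg, abs_of_nonpos]

lemma sq_norm_sq_sub_norm_sq_le {E : Type*} [SeminormedAddCommGroup E] (a c : E) :
    (‖a‖ ^ 2 - ‖c‖ ^ 2) ^ 2 ≤ ‖a - c‖ ^ 2 * (2 * ‖a‖ ^ 2 + 2 * ‖c‖ ^ 2) := by
  have hsub : (‖a‖ - ‖c‖) ^ 2 ≤ ‖a - c‖ ^ 2 := by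
    rw [← sq_abs]
    exact pow_le_pow_left₀ (abs_nonneg _) (abs_norm_sub_norm_le a c) 2
  calc (‖a‖ ^ 2 - ‖c‖ ^ 2) ^ 2 = (‖a‖ - ‖c‖) ^ 2 * (‖a‖ + ‖c‖) ^ 2 := by ring
    _ ≤ ‖a - c‖ ^ 2 * (2 * ‖a‖ ^ 2 + 2 * ‖c‖ ^ 2) := by
      gcongr
      nlinarith [sq_nonneg (‖a‖ - ‖c‖)]

section

variable {V : Type*} {b : V → V → ℝ}

/-- `G` contains `K` and every neighbour of a vertex of `K`, so that all sums over edges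
at `K` are finite sums over `G`. -/
def Encloses (b : V → V → ℝ) (K G : Finset V) : Prop :=
  K ⊆ G ∧ ∀ x ∈ K, ∀ y, b x y ≠ 0 ∨ b y x ≠ 0 → y ∈ G

lemma exists_encloses (hloc : ∀ x, {y | b x y ≠ 0 ∨ b y x ≠ 0}.Finite) (K : Finset V) :
    ∃ G, Encloses b K G := by
  classical
  refine ⟨K ∪ K.biUnion fun x => (hloc x).toFinset, subset_union_left, fun x hx y hxy => ?_⟩
  exact mem_union_right _ (mem_biUnion.2 ⟨x, hx, (hloc x).mem_toFinset.2 hxy⟩)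

namespace Encloses

variable {K K' G : Finset V}

lemma mono (hG : Encloses b K G) (hK : K' ⊆ K) : Encloses b K' G :=
  ⟨hK.trans hG.1, fun x hx => hG.2 x (hK hx)⟩

lemma sum_eq_betaPlus (hG : Encloses b K G) {x : V} (hx : x ∈ K) :
    ∑ y ∈ G, b x y = betaPlus b x :=
  (finsum_eq_sum_of_support_subset _ fun y hy => hG.2 x hx y (Or.inl hy)).symm

lemma sum_eq_betaMinus (hG : Encloses b K G) {y : V} (hy : y ∈ K) :
    ∑ x ∈ G, b x y = betaMinus b y :=
  (finsum_eq_sum_of_support_subset _ fun x hx => hG.2 y hy x (Or.inr hx)).symm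

end Encloses

def edgeSum (b : V → V → ℝ) (G : Finset V) (F : V → V → ℝ) : ℝ :=
  ∑ x ∈ G, ∑ y ∈ G, b x y * F x y

section edgeSum

variable {G : Finset V} {F H : V → V → ℝ}

lemma edgeSum_add :
    edgeSum b G (fun x y => F x y + H x y) = edgeSum b G F + edgeSum b G H := by
  simp only [edgeSum, mul_add, sum_add_distrib]

lemma edgeSum_const_mul (c : ℝ) : edgeSum b G (fun x y => c * F x y) = c * edgeSum b G F := by
  simp only [edgeSum, mul_sum]
  exact sum_congr rfl fun x _ => sum_congr rfl fun y _ => by ring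

lemma edgeSum_sq_le_mul (hb : ∀ x y, 0 ≤ b x y) {P : V → V → ℝ} (hF : ∀ x y, 0 ≤ F x y)
    (hH : ∀ x y, 0 ≤ H x y) (hP : ∀ x y, P x y ^ 2 ≤ F x y * H x y) :
    edgeSum b G P ^ 2 ≤ edgeSum b G F * edgeSum b G H := by
  simp only [edgeSum, ← sum_product' G G]
  refine sum_sq_le_sum_mul_sum_of_sq_le_mul _ (fun p _ => mul_nonneg (hb _ _) (hF _ _))
    (fun p _ => mul_nonneg (hb _ _) (hH _ _)) fun p _ => ?_
  calc (b p.1 p.2 * P p.1 p.2) ^ 2 = b p.1 p.2 ^ 2 * P p.1 p.2 ^ 2 := mul_pow _ _ _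
    _ ≤ b p.1 p.2 ^ 2 * (F p.1 p.2 * H p.1 p.2) := by gcongr; exact hP _ _
    _ = b p.1 p.2 * F p.1 p.2 * (b p.1 p.2 * H p.1 p.2) := by ring

variable {K : Finset V} {φ : V → ℝ}

lemma Encloses.edgeSum_left (hG : Encloses b K G) (hφ : support φ ⊆ K) :
    edgeSum b G (fun x _ => φ x) = ∑ x ∈ G, betaPlus b x * φ x := by
  refine sum_congr rfl fun x _ => ?_
  by_cases hx : φ x = 0
  · simp [hx]
  · rw [← sum_mul, hG.sum_eq_betaPlus (hφ hx)]

lemma Encloses.edgeSum_right (hβ : ∀ x, betaPlus b x = betaMinus b x) (hG : Encloses b K G)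
    (hφ : support φ ⊆ K) :
    edgeSum b G (fun _ y => φ y) = ∑ x ∈ G, betaPlus b x * φ x := by
  rw [edgeSum, sum_comm]
  refine sum_congr rfl fun y _ => ?_
  by_cases hy : φ y = 0
  · simp [hy]
  · rw [← sum_mul, hG.sum_eq_betaMinus (hφ hy), hβ]

lemma Encloses.edgeSum_sub_eq_zero (hβ : ∀ x, betaPlus b x = betaMinus b x)
    (hG : Encloses b K G) (hφ : support φ ⊆ K) : edgeSum b G (fun x y => φ x - φ y) = 0 := by
  have := hG.edgeSum_left hφ
  rw [← hG.edgeSum_right hβ hφ] at this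
  simp only [edgeSum, mul_sub, sum_sub_distrib] at this ⊢
  rw [this, sub_self]

end edgeSum

section Cheeger

variable [DecidableEq V] {w : V → ℝ} {Ω : Set V} {U G : Finset V}

lemma Encloses.edgeSum_abs_indicator_sub (hG : Encloses b U G) :
    edgeSum b G (fun x y => |(if x ∈ U then (1 : ℝ) else 0) - if y ∈ U then 1 else 0|) =
      bdryWeight b U := by
  have hrow : ∀ x ∈ U, ∑ᶠ y, (if y ∈ U then 0 else b x y + b y x) =
      ∑ y ∈ G, ((if y ∈ U then 0 else b x y) + if y ∈ U then 0 else b y x) := by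
    intro x hx
    rw [finsum_eq_sum_of_support_subset _ fun y hy => hG.2 x hx y ?_]
    · exact sum_congr rfl fun y _ => by split_ifs <;> simp
    · by_contra! h
      simp [h.1, h.2] at hy
  have hsplit : ∀ x y, b x y * |(if x ∈ U then (1 : ℝ) else 0) - if y ∈ U then 1 else 0| =
      (if x ∈ U then (if y ∈ U then 0 else b x y) else 0) +
        if y ∈ U then (if x ∈ U then 0 else b x y) else 0 := by
    intro x y
    split_ifs <;> simp
  simp only [edgeSum, hsplit, sum_add_distrib]
  rw [sum_comm (f := fun x y => if y ∈ U then (if x ∈ U then 0 else b x y) else 0)]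
  simp only [← sum_add_distrib, sum_ite_irrel, sum_const_zero, sum_ite_mem,
    inter_eq_right.2 hG.1]
  exact (sum_congr rfl hrow).symm

lemma bdryWeight_nonneg (hb : ∀ x y, 0 ≤ b x y) (U : Finset V) : 0 ≤ bdryWeight b U :=
  sum_nonneg fun x _ => finsum_nonneg fun y => by
    split_ifs
    exacts [le_rfl, add_nonneg (hb x y) (hb y x)]

lemma cheeger_nonneg (hb : ∀ x y, 0 ≤ b x y) (hw : ∀ x, 0 ≤ w x) : 0 ≤ cheeger b w Ω :=
  Real.sInf_nonneg <| by
    rintro _ ⟨U, -, -, rfl⟩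
    exact div_nonneg (bdryWeight_nonneg hb U) (sum_nonneg fun x _ => hw x)

lemma cheeger_mul_le (hb : ∀ x y, 0 ≤ b x y) (hw : ∀ x, 0 ≤ w x) (hU : U.Nonempty)
    (hUΩ : ↑U ⊆ Ω) : cheeger b w Ω * ∑ x ∈ U, w x ≤ bdryWeight b U := by
  have hbdd : BddBelow {r : ℝ | ∃ U : Finset V, U.Nonempty ∧ ↑U ⊆ Ω ∧
      r = bdryWeight b U / ∑ x ∈ U, w x} := by
    refine ⟨0, ?_⟩
    rintro _ ⟨U, -, -, rfl⟩
    exact div_nonneg (bdryWeight_nonneg hb U) (sum_nonneg fun x _ => hw x)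
  exact mul_le_of_le_div₀ (bdryWeight_nonneg hb U) (sum_nonneg fun x _ => hw x)
    (csInf_le hbdd ⟨U, hU, hUΩ, rfl⟩)

lemma le_cheeger {a : ℝ} (hΩ : Ω.Nonempty)
    (h : ∀ U : Finset V, U.Nonempty → ↑U ⊆ Ω → a ≤ bdryWeight b U / ∑ x ∈ U, w x) :
    a ≤ cheeger b w Ω := by
  obtain ⟨x₀, hx₀⟩ := hΩ
  refine le_csInf ⟨_, {x₀}, singleton_nonempty x₀, by simpa using hx₀, rfl⟩ ?_
  rintro _ ⟨U, hU, hUΩ, rfl⟩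
  exact h U hU hUΩ

end Cheeger

section Coarea

variable [DecidableEq V] {w : V → ℝ} {Ω : Set V}

lemma Encloses.edgeSum_abs_sub_eq_bdryWeight_add {U G : Finset V} (hG : Encloses b U G)
    {φ : V → ℝ} {m : ℝ} (hm : 0 ≤ m) (hlevel : ∀ x, min (φ x) m = m * if x ∈ U then 1 else 0) :
    edgeSum b G (fun x y => |φ x - φ y|) =
      m * bdryWeight b U + edgeSum b G (fun x y => |max (φ x) m - max (φ y) m|) := by
  rw [← hG.edgeSum_abs_indicator_sub, ← edgeSum_const_mul, ← edgeSum_add]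
  congr 1
  ext x y
  rw [abs_sub_eq_abs_min_sub_min_add_abs_max_sub_max _ _ m, hlevel, hlevel, ← mul_sub,
    abs_mul, abs_of_nonneg hm]

theorem Encloses.cheeger_mul_sum_le_edgeSum_abs (hb : ∀ x y, 0 ≤ b x y) (hw : ∀ x, 0 ≤ w x)
    {K G : Finset V} (hG : Encloses b K G) (hKΩ : ↑K ⊆ Ω) {φ : V → ℝ} (hφ : ∀ x, 0 ≤ φ x)
    (hφK : support φ ⊆ K) :
    cheeger b w Ω * ∑ x ∈ G, w x * φ x ≤ edgeSum b G (fun x y => |φ x - φ y|) := by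
  induction K using Finset.strongInduction generalizing φ with
  | H K ih =>
  set U := K.filter fun x => 0 < φ x
  have hzero : ∀ x ∉ U, φ x = 0 := fun x hx => by
    by_contra h
    exact hx (mem_filter.2 ⟨hφK h, (hφ x).lt_of_ne' h⟩)
  rcases U.eq_empty_or_nonempty with hU | hU
  · have hφ0 : ∀ x, φ x = 0 := fun x => hzero x (by simp [hU])
    simp [hφ0, edgeSum]
  obtain ⟨x₀, hx₀U, hmin⟩ := U.exists_min_image φ hU
  obtain ⟨hx₀K, hm⟩ := mem_filter.1 hx₀U
  set m := φ x₀
  have hlevel : ∀ x, min (φ x) m = m * if x ∈ U then 1 else 0 := fun x => by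
    split_ifs with hx
    · simpa using hmin x hx
    · simp [hzero x hx, hm.le]
  set ψ : V → ℝ := fun x => max (φ x) m - m
  have hψK : support ψ ⊆ K.erase x₀ := fun x hx => by
    have hmx : m < φ x := by
      by_contra! h
      exact hx (by simp [ψ, max_eq_right h])
    refine mem_erase.2 ⟨fun h => hmx.ne' (congrArg φ h), hφK (hm.trans hmx).ne'⟩
  have hUG : U ⊆ G := (filter_subset _ _).trans hG.1
  have hdecomp : ∀ x, φ x = min (φ x) m + ψ x := fun x => by
    simp only [ψ]
    linarith [min_add_max (φ x) m]
  have hsum : ∑ x ∈ G, w x * φ x = m * ∑ x ∈ U, w x + ∑ x ∈ G, w x * ψ x := by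
    calc ∑ x ∈ G, w x * φ x = ∑ x ∈ G, (m * (w x * if x ∈ U then 1 else 0) + w x * ψ x) :=
          sum_congr rfl fun x _ => by
            rw [mul_left_comm, ← hlevel, ← mul_add, ← hdecomp]
      _ = m * ∑ x ∈ U, w x + ∑ x ∈ G, w x * ψ x := by
          simp only [sum_add_distrib, ← mul_sum, mul_ite, mul_one, mul_zero, sum_ite_mem,
            inter_eq_right.2 hUG]
  have hψ := ih (K.erase x₀) (erase_ssubset hx₀K) (hG.mono (erase_subset _ _))
    ((coe_subset.2 (erase_subset _ _)).trans hKΩ) (fun x => sub_nonneg.2 (le_max_right _ _)) hψK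
  have hcU := cheeger_mul_le hb hw hU ((coe_subset.2 (filter_subset _ _)).trans hKΩ)
  have hedge := (hG.mono (filter_subset _ _)).edgeSum_abs_sub_eq_bdryWeight_add hm.le hlevel
  simp only [sub_sub_sub_cancel_right] at hψ
  rw [hsum, hedge]
  linarith [mul_le_mul_of_nonneg_left hcU hm.le]

end Coarea

section Green

variable {K G : Finset V} {f : V → ℂ}

lemma innerW_self_eq_sum (w : V → ℝ) (hf : support f ⊆ G) :
    innerW w f f = ↑(∑ x ∈ G, w x * normSq (f x)) := by
  rw [innerW, finsum_eq_sum_of_support_subset _ fun x hx => hf fun h => by simp [h] at hx]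
  push_cast
  exact sum_congr rfl fun x _ => by rw [mul_assoc, mul_conj]

lemma re_sub_mul_conj (a c : ℂ) :
    ((a - c) * conj a).re = (normSq (a - c) + normSq a - normSq c) / 2 := by
  simp only [mul_re, sub_re, sub_im, conj_re, conj_im, normSq_apply]
  ring

lemma Encloses.re_innerW_lap (hβp : ∀ x, 0 < betaPlus b x)
    (hβ : ∀ x, betaPlus b x = betaMinus b x) (hG : Encloses b K G) (hf : support f ⊆ K) :
    (innerW (betaPlus b) (lap b (betaPlus b) f) f).re =
      edgeSum b G (fun x y => normSq (f x - f y)) / 2 := by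
  have hterm : ∀ x, (betaPlus b x : ℂ) * lap b (betaPlus b) f x * conj (f x) =
      ∑ y ∈ G, (b x y : ℂ) * ((f x - f y) * conj (f x)) := fun x => by
    by_cases hx : f x = 0
    · simp [hx]
    rw [lap, finsum_eq_sum_of_support_subset _ fun y hy => hG.2 x (hf hx) y (Or.inl ?_)]
    · have : (betaPlus b x : ℂ) ≠ 0 := ofReal_ne_zero.2 (hβp x).ne'
      rw [← mul_assoc, mul_one_div_cancel this, one_mul, sum_mul]
      exact sum_congr rfl fun y _ => by ring
    · exact fun h => by simp [h] at hy
  have hnormSq : support (fun x => normSq (f x)) ⊆ K := fun x hx => hf fun h => by simp [h] at hx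
  calc (innerW (betaPlus b) (lap b (betaPlus b) f) f).re
      = edgeSum b G (fun x y => ((f x - f y) * conj (f x)).re) := by
        rw [innerW, finsum_eq_sum_of_support_subset _ fun x hx =>
          hG.1 (hf fun h => by simp [h] at hx)]
        simp only [hterm, re_sum, re_ofReal_mul, edgeSum]
    _ = edgeSum b G (fun x y => 2⁻¹ * normSq (f x - f y) +
          2⁻¹ * (normSq (f x) - normSq (f y))) := by
        simp only [re_sub_mul_conj]
        congr 1
        ext x y
        ring
    _ = edgeSum b G (fun x y => normSq (f x - f y)) / 2 := by
        rw [edgeSum_add, edgeSum_const_mul, edgeSum_const_mul,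
          hG.edgeSum_sub_eq_zero hβ hnormSq]
        ring

end Green

section NuD

variable {Ω : Set V} {m : V → ℝ} {a : ℝ}

lemma le_nuD
    (hne : ∃ f : V → ℂ, (support f).Finite ∧ support f ⊆ Ω ∧ innerW m f f = 1)
    (h : ∀ f : V → ℂ, (support f).Finite → support f ⊆ Ω → innerW m f f = 1 →
      a ≤ (innerW m (lap b m f) f).re) :
    a ≤ nuD b m Ω := by
  obtain ⟨f, hfin, hfΩ, hf⟩ := hne
  refine le_csInf ⟨_, f, hfin, hfΩ, hf, rfl⟩ ?_
  rintro _ ⟨f, hfin, hfΩ, hf, rfl⟩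
  exact h f hfin hfΩ hf

lemma nuD_le
    (h : ∀ f : V → ℂ, (support f).Finite → support f ⊆ Ω → innerW m f f = 1 →
      a ≤ (innerW m (lap b m f) f).re)
    {f : V → ℂ} (hfin : (support f).Finite) (hfΩ : support f ⊆ Ω) (hf : innerW m f f = 1) :
    nuD b m Ω ≤ (innerW m (lap b m f) f).re := by
  refine csInf_le ⟨a, ?_⟩ ⟨f, hfin, hfΩ, hf, rfl⟩
  rintro _ ⟨f, hfin, hfΩ, hf, rfl⟩
  exact h f hfin hfΩ hf

end NuD

section Bounds

variable [DecidableEq V] {Ω : Set V}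

theorem Encloses.cheeger_mul_sq_le (hb : ∀ x y, 0 ≤ b x y) (hβp : ∀ x, 0 < betaPlus b x)
    (hβ : ∀ x, betaPlus b x = betaMinus b x) {K G : Finset V} (hG : Encloses b K G)
    (hKΩ : ↑K ⊆ Ω) {f : V → ℂ} (hf : support f ⊆ K) :
    (cheeger b (betaPlus b) Ω * ∑ x ∈ G, betaPlus b x * normSq (f x)) ^ 2 ≤
      4 * (∑ x ∈ G, betaPlus b x * normSq (f x)) *
        edgeSum b G (fun x y => normSq (f x - f y)) := by
  have hφ : support (fun x => normSq (f x)) ⊆ K := fun x hx => hf fun h => by simp [h] at hx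
  have hcoarea := hG.cheeger_mul_sum_le_edgeSum_abs hb (fun x => (hβp x).le) hKΩ
    (fun x => normSq_nonneg (f x)) hφ
  have hCS : edgeSum b G (fun x y => |normSq (f x) - normSq (f y)|) ^ 2 ≤
      edgeSum b G (fun x y => normSq (f x - f y)) *
        edgeSum b G (fun x y => 2 * normSq (f x) + 2 * normSq (f y)) :=
    edgeSum_sq_le_mul hb (fun _ _ => normSq_nonneg _)
      (fun x y => by linarith [normSq_nonneg (f x), normSq_nonneg (f y)]) fun x y => by
      simpa only [sq_abs, normSq_eq_norm_sq] using sq_norm_sq_sub_norm_sq_le (f x) (f y)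
  rw [edgeSum_add, edgeSum_const_mul, edgeSum_const_mul (F := fun _ y => normSq (f y)),
    hG.edgeSum_left hφ, hG.edgeSum_right hβ hφ] at hCS
  calc _ ≤ edgeSum b G (fun x y => |normSq (f x) - normSq (f y)|) ^ 2 :=
        pow_le_pow_left₀ (mul_nonneg (cheeger_nonneg hb fun x => (hβp x).le)
          (sum_nonneg fun x _ => mul_nonneg (hβp x).le (normSq_nonneg _))) hcoarea 2
    _ ≤ _ := hCS
    _ = _ := by ring

theorem sq_cheeger_div_eight_le (hb : ∀ x y, 0 ≤ b x y)
    (hloc : ∀ x, {y | b x y ≠ 0 ∨ b y x ≠ 0}.Finite) (hβp : ∀ x, 0 < betaPlus b x)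
    (hβ : ∀ x, betaPlus b x = betaMinus b x) {f : V → ℂ} (hfin : (support f).Finite)
    (hfΩ : support f ⊆ Ω) (hf : innerW (betaPlus b) f f = 1) :
    cheeger b (betaPlus b) Ω ^ 2 / 8 ≤ (innerW (betaPlus b) (lap b (betaPlus b) f) f).re := by
  obtain ⟨G, hG⟩ := exists_encloses hloc hfin.toFinset
  have hfK : support f ⊆ hfin.toFinset := by simp
  have hnorm : ∑ x ∈ G, betaPlus b x * normSq (f x) = 1 := by
    exact_mod_cast (innerW_self_eq_sum _ (hfK.trans (coe_subset.2 hG.1))).symm.trans hf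
  have := hG.cheeger_mul_sq_le hb hβp hβ (by simpa using hfΩ) hfK
  rw [hnorm, mul_one, mul_one] at this
  rw [hG.re_innerW_lap hβp hβ hfK]
  linarith

theorem exists_re_innerW_lap_eq_bdryWeight (hloc : ∀ x, {y | b x y ≠ 0 ∨ b y x ≠ 0}.Finite)
    (hβp : ∀ x, 0 < betaPlus b x) (hβ : ∀ x, betaPlus b x = betaMinus b x) {U : Finset V}
    (hU : U.Nonempty) :
    ∃ f : V → ℂ, support f = U ∧ innerW (betaPlus b) f f = 1 ∧
      (innerW (betaPlus b) (lap b (betaPlus b) f) f).re =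
        bdryWeight b U / (∑ x ∈ U, betaPlus b x) / 2 := by
  set c := ∑ x ∈ U, betaPlus b x
  have hc : 0 < c := sum_pos (fun x _ => hβp x) hU
  obtain ⟨G, hG⟩ := exists_encloses hloc U
  set f : V → ℂ := fun x => ((if x ∈ U then (√c)⁻¹ else 0 : ℝ) : ℂ)
  have hsupp : support f = U := by
    ext x
    by_cases hx : x ∈ U <;> simp [f, hx, (Real.sqrt_pos.2 hc).ne']
  refine ⟨f, hsupp, ?_, ?_⟩
  · rw [innerW_self_eq_sum _ (hsupp.trans_subset (coe_subset.2 hG.1))]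
    have hterm : ∀ x, betaPlus b x * normSq (f x) = c⁻¹ * if x ∈ U then betaPlus b x else 0 :=
      fun x => by split_ifs <;> simp [f, *, Real.mul_self_sqrt hc.le, mul_comm]
    simp only [hterm, ← mul_sum, sum_ite_mem, inter_eq_right.2 hG.1]
    exact_mod_cast inv_mul_cancel₀ hc.ne'
  · rw [hG.re_innerW_lap hβp hβ hsupp.subset, ← hG.edgeSum_abs_indicator_sub]
    congr 1
    rw [div_eq_inv_mul, ← edgeSum_const_mul]
    refine congrArg _ (funext₂ fun x y => ?_)
    by_cases hx : x ∈ U <;> by_cases hy : y ∈ U <;>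
      simp [f, hx, hy, Real.mul_self_sqrt hc.le]

end Bounds

end

theorem cheeger_inequality_normalized_general
    (V : Type*) [DecidableEq V] (b : V → V → ℝ)
    (hb_nonneg : ∀ x y, 0 ≤ b x y)
    (hloc_fin : ∀ x, {y | b x y ≠ 0 ∨ b y x ≠ 0}.Finite)
    (hβp_pos : ∀ x, 0 < betaPlus b x)
    (hβ : ∀ x, betaPlus b x = betaMinus b x)
    (Ω : Set V) (hΩ : Ω.Nonempty) :
    (cheeger b (betaPlus b) Ω) ^ 2 / 8 ≤ nuD b (betaPlus b) Ω ∧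
    nuD b (betaPlus b) Ω ≤ cheeger b (betaPlus b) Ω / 2 := by
  have lower := fun f => sq_cheeger_div_eight_le (Ω := Ω) (f := f) hb_nonneg hloc_fin hβp_pos hβ
  have upper := fun U => exists_re_innerW_lap_eq_bdryWeight (U := U) hloc_fin hβp_pos hβ
  obtain ⟨x₀, hx₀⟩ := hΩ
  obtain ⟨f₀, hf₀, hf₀1, -⟩ := upper {x₀} (singleton_nonempty x₀)
  refine ⟨le_nuD ⟨f₀, by simp [hf₀], by simpa [hf₀] using hx₀, hf₀1⟩ lower, ?_⟩
  have := le_cheeger (a := 2 * nuD b (betaPlus b) Ω) ⟨x₀, hx₀⟩ fun U hU hUΩ => by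
    obtain ⟨f, hf, hf1, hre⟩ := upper U hU
    have := nuD_le lower (f := f) (by simp [hf]) (hf ▸ hUΩ) hf1
    rw [hre, le_div_iff₀ two_pos] at this
    rwa [mul_comm]
  linarith

/-- assume Assumption (β) and let `Ω ⊆ V` be nonempty. Then
`h̃(Ω)²/8 ≤ ν(Δ̃^D_Ω) ≤ (1/2) h̃(Ω)`. -/
theorem cheeger_inequality_normalized
    (V : Type*) [Countable V] [DecidableEq V] (b : V → V → ℝ)
    (hb_nonneg : ∀ x y, 0 ≤ b x y)
    (hb_loop : ∀ x, b x x = 0)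
    (hloc_fin : ∀ x, {y | b x y ≠ 0 ∨ b y x ≠ 0}.Finite)
    (hβp_pos : ∀ x, 0 < betaPlus b x)
    (hβm_pos : ∀ x, 0 < betaMinus b x)
    (hβ : ∀ x, betaPlus b x = betaMinus b x)
    (Ω : Set V) (hΩ : Ω.Nonempty) :
    (cheeger b (betaPlus b) Ω) ^ 2 / 8 ≤ nuD b (betaPlus b) Ω ∧
    nuD b (betaPlus b) Ω ≤ cheeger b (betaPlus b) Ω / 2 :=
  cheeger_inequality_normalized_general V b hb_nonneg hloc_fin hβp_pos hβ Ω hΩ
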